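/- arXiv:2008.09909 — 11 statements merged into one kernel-verified Lean document; each statement's English description precedes it below -/
import Mathlib

section
/- For a term t (a consistent set of literals) and a translation a, the least a-monotone overapproximation of t is equivalent to the conjunction of exactly those literals ℓ ∈ t that a does not satisfy: M_a(⋀t) ≡ ⋀{ℓ ∈ t | a ⊭ ℓ}. -/
/-- A state satisfies a literal `(i, b)` (variable `pᵢ` if `b = true`, `¬pᵢ` if `b = false`). -/
def satLit {n : ℕ} (σ : Fin n → Bool) (l : Fin n × Bool) : Prop :=
  σ l.1 = l.2

/-- A state satisfies a term (a finite set of literals, interpreted as a conjunction). -/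
def satTerm {n : ℕ} (σ : Fin n → Bool) (t : Finset (Fin n × Bool)) : Prop :=
  ∀ l ∈ t, satLit σ l

/-- A state satisfies a clause (a finite set of literals, interpreted as a disjunction). -/
def satClause {n : ℕ} (σ : Fin n → Bool) (c : Finset (Fin n × Bool)) : Prop :=
  ∃ l ∈ c, satLit σ l

/-- A state satisfies a DNF formula (a list of terms, interpreted as a disjunction). -/
def satDNF {n : ℕ} (σ : Fin n → Bool) (φ : List (Finset (Fin n × Bool))) : Prop :=
  ∃ t ∈ φ, satTerm σ t

/-- A state satisfies a CNF formula (a list of clauses, interpreted as a conjunction). -/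
def satCNF {n : ℕ} (σ : Fin n → Bool) (φ : List (Finset (Fin n × Bool))) : Prop :=
  ∀ c ∈ φ, satClause σ c

/-- `leA a v x` (`v ≤ₐ x`): every coordinate where `v` disagrees with the
translation `a` is a coordinate where `x` disagrees with `a`. -/
def leA {n : ℕ} (a v x : Fin n → Bool) : Prop :=
  ∀ i, v i ≠ a i → x i ≠ a i

/-- A Boolean function is `a`-monotone. -/
def aMonotone {n : ℕ} (a : Fin n → Bool) (ψ : (Fin n → Bool) → Prop) : Prop :=
  ∀ v x, leA a v x → ψ v → ψ x

/-- `MonOver a φ` is `M_a(φ)`, the least `a`-monotone overapproximation of `φ`: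
`x ⊨ M_a(φ)` iff `∃ v ≤ₐ x` with `v ⊨ φ`. -/
def MonOver {n : ℕ} (a : Fin n → Bool) (φ : (Fin n → Bool) → Prop)
    (x : Fin n → Bool) : Prop :=
  ∃ v, leA a v x ∧ φ v

/-- The monotone cube `cubeₐ(v)`: the conjunction of all literals on which `v`
disagrees with the translation `a`. -/
def cubeA {n : ℕ} (a v : Fin n → Bool) : Finset (Fin n × Bool) :=
  (Finset.univ.filter (fun i => v i ≠ a i)).image (fun i => (i, v i))

/-- For a consistent term `t` and translation `a`, the least `a`-monotone
overapproximation of `⋀t` is the conjunction of the literals of `t` not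
satisfied by `a` (i.e. those `l` with `a l.1 ≠ l.2`). -/
theorem monOver_term {n : ℕ} (a : Fin n → Bool) (t : Finset (Fin n × Bool))
    (hcons : ∀ i : Fin n, ¬ ((i, true) ∈ t ∧ (i, false) ∈ t)) :
    ∀ x, MonOver a (fun σ => satTerm σ t) x ↔
      satTerm x (t.filter (fun l => a l.1 ≠ l.2)) := by
  intro x
  constructor
  · rintro ⟨v, hle, hv⟩ l hl
    simp only [Finset.mem_filter] at hl
    obtain ⟨hlt, hne⟩ := hl
    have hvl := hv l hlt
    have : v l.1 ≠ a l.1 := by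
      rw [hvl]; exact fun h => hne h.symm
    have hx := hle l.1 this
    show x l.1 = l.2
    cases hxv : x l.1 <;> cases h2 : l.2 <;> cases ha : a l.1 <;> simp_all
  · intro hx
    refine ⟨fun i => if (i, !(a i)) ∈ t then !(a i) else a i, ?_, ?_⟩
    · intro i hne
      by_cases h : (i, !(a i)) ∈ t
      · have := hx (i, !(a i)) (Finset.mem_filter.mpr ⟨h, by simp⟩)
        simp [satLit] at this
        rw [this]; simp
      · simp [h] at hne
    · rintro ⟨i, b⟩ hl
      by_cases hb : b = !(a i)
      · have h1 : (i, !(a i)) ∈ t := hb ▸ hl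
        simp [satLit, h1, hb]
      · have hb' : b = a i := by
          cases h1 : b <;> cases h2 : a i <;> simp_all
        have hnot : ¬ (i, !(a i)) ∈ t := by
          intro hmem
          have := hcons i
          cases h2 : a i
          · exact this ⟨by simpa [h2] using hmem, by rw [← h2, ← hb']; exact hl⟩
          · exact this ⟨by rw [← h2, ← hb']; exact hl, by simpa [h2] using hmem⟩
        simp [satLit, hnot, hb']
end

section
/- If {a₁, ..., a_t} is a monotone basis for the Boolean function φ, then φ is equivalent to the conjunction of its monotonizations: φ ≡ ⋀_{i=1}^{t} M_{a_i}(φ). -/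
/-- `{a₁,...,a_t}` is a monotone basis for `φ`: in some CNF representation of
`φ`, every clause is `aᵢ`-monotone for some `aᵢ` in the list. -/
def isMonotoneBasis {n : ℕ} (as : List (Fin n → Bool))
    (φ : (Fin n → Bool) → Prop) : Prop :=
  ∃ cs : List (Finset (Fin n × Bool)),
    (∀ σ, φ σ ↔ satCNF σ cs) ∧
    ∀ c ∈ cs, ∃ a ∈ as, aMonotone a (fun σ => satClause σ c)

/-- If `{a₁,...,a_t}` is a monotone basis for `φ`, then `φ` is equivalent to the
conjunction of its monotonizations `⋀ᵢ M_{aᵢ}(φ)`. -/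
theorem basis_conj_monotonizations {n : ℕ} (as : List (Fin n → Bool))
    (φ : (Fin n → Bool) → Prop) (h : isMonotoneBasis as φ) :
    ∀ x, φ x ↔ ∀ a ∈ as, MonOver a φ x := by
  obtain ⟨cs, hcs, hmono⟩ := h
  intro x
  constructor
  · intro hx a _
    exact ⟨x, fun i hi => hi, hx⟩
  · intro hall
    rw [hcs]
    intro c hc
    obtain ⟨a, ha, hma⟩ := hmono c hc
    obtain ⟨v, hle, hv⟩ := hall a ha
    exact hma v x hle ((hcs v).mp hv c hc)
end

section
/- Let φ be a DNF formula over Fin n → Bool and let x be an a-minimal positive example for φ, i.e., x ⊨ φ and for every coordinate i with x(i) ≠ a(i), the state x[i ↦ a(i)] does not satisfy φ. Then there exists a term t of φ such that M_a(⋀t) ≡ cube_a(x). -/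
/-- If `x` is an `a`-minimal positive example for a DNF formula `φ` (i.e.
`x ⊨ φ`, and flipping any coordinate of `x` towards `a` falsifies `φ`), then
there is a term `t` of `φ` with `M_a(⋀t) ≡ cubeₐ(x)`. -/
theorem a_minimal_positive_term {n : ℕ} (a x : Fin n → Bool)
    (φ : List (Finset (Fin n × Bool)))
    (hpos : satDNF x φ)
    (hmin : ∀ i : Fin n, x i ≠ a i → ¬ satDNF (Function.update x i (a i)) φ) :
    ∃ t ∈ φ, ∀ y, MonOver a (fun σ => satTerm σ t) y ↔ satTerm y (cubeA a x) := by
  obtain ⟨t, ht, hxt⟩ := hpos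
  refine ⟨t, ht, fun y => ?_⟩
  have hcube_mem : ∀ i b, (i, b) ∈ cubeA a x ↔ x i ≠ a i ∧ b = x i := by
    intro i b
    simp only [cubeA, Finset.mem_image, Finset.mem_filter, Finset.mem_univ, true_and,
      Prod.mk.injEq]
    constructor
    · rintro ⟨j, hj, rfl, rfl⟩; exact ⟨hj, rfl⟩
    · rintro ⟨h1, rfl⟩; exact ⟨i, h1, rfl, rfl⟩
  have hsub : ∀ i, x i ≠ a i → (i, x i) ∈ t := by
    intro i hi
    by_contra hc
    refine hmin i hi ⟨t, ht, ?_⟩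
    rintro ⟨j, b⟩ hl
    have hb : x j = b := hxt _ hl
    simp only [satLit]
    rw [Function.update_apply]
    split_ifs with h
    · exact absurd (h ▸ hl) (hb ▸ h ▸ hc)
    · exact hb
  constructor
  · rintro ⟨v, hvy, hvt⟩
    rintro ⟨i, b⟩ hl
    rw [hcube_mem] at hl
    obtain ⟨hxi, rfl⟩ := hl
    have hv : v i = x i := hvt _ (hsub i hxi)
    have hy : y i ≠ a i := hvy i (by rw [hv]; exact hxi)
    simp only [satLit]
    revert hy hxi
    cases a i <;> cases x i <;> cases y i <;> simp
  · intro hy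
    refine ⟨fun i => if (i, !a i) ∈ t then !a i else a i, ?_, ?_⟩
    · intro i hi
      simp only at hi
      split_ifs at hi with h
      · have hx : x i = !a i := hxt _ h
        have hxi : x i ≠ a i := by rw [hx]; cases a i <;> simp
        have := hy _ ((hcube_mem i (x i)).2 ⟨hxi, rfl⟩)
        simp only [satLit] at this
        rw [this, hx]; cases a i <;> simp
      · exact absurd rfl hi
    · rintro ⟨i, b⟩ hl
      have hb : x i = b := hxt _ hl
      simp only [satLit]
      by_cases hba : b = a i
      · subst hba
        have hnt : (i, !a i) ∉ t := by
          intro hc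
          have h2 : x i = !a i := hxt _ hc
          rw [hb] at h2
          simp at h2
        simp only [if_neg hnt]
      · have hb' : b = !a i := by revert hba; cases a i <;> cases b <;> simp
        subst hb'
        simp only [if_pos hl]
end

section
/- The set B_r of all translations assigning true to at most r variables is a monotone basis for every r-almost-monotone DNF formula; that is, if φ is a DNF formula in which at most r of the terms contain a negative literal, then φ has a CNF representation in which each clause is a-monotone for some a ∈ B_r. -/
/-!
Distributing `φ` into a CNF, each clause takes one literal from every term, so its negative
literals come from at most `r` terms. Let `a` be true exactly on the variables negated in the
clause: every literal of the clause then either points away from `a` or has its complement in the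
clause, and either way the clause is `a`-monotone.
-/

noncomputable def cnfOfDNF {α : Type*} [DecidableEq α] : List (Finset α) → List (Finset α)
  | [] => [∅]
  | t :: φ => (cnfOfDNF φ).flatMap fun c => t.toList.map fun l => insert l c

lemma mem_cnfOfDNF_cons {α : Type*} [DecidableEq α] {t : Finset α} {φ : List (Finset α)}
    {c' : Finset α} :
    c' ∈ cnfOfDNF (t :: φ) ↔ ∃ c ∈ cnfOfDNF φ, ∃ l ∈ t, insert l c = c' := by
  simp [cnfOfDNF]

lemma card_filter_le_countP_of_mem_cnfOfDNF {α : Type*} [DecidableEq α] (P : α → Prop)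
    [DecidablePred P] {φ : List (Finset α)} {c : Finset α} (hc : c ∈ cnfOfDNF φ) :
    (c.filter P).card ≤ φ.countP fun t => decide (∃ l ∈ t, P l) := by
  induction φ generalizing c with
  | nil => simp_all [cnfOfDNF]
  | cons t φ ih =>
    obtain ⟨c₀, hc₀, l, hl, rfl⟩ := mem_cnfOfDNF_cons.mp hc
    rw [List.countP_cons, Finset.filter_insert]
    by_cases hP : P l
    · rw [if_pos hP, if_pos (decide_eq_true ⟨l, hl, hP⟩)]
      exact (Finset.card_insert_le _ _).trans (Nat.add_le_add_right (ih hc₀) 1)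
    · rw [if_neg hP]
      exact (ih hc₀).trans (Nat.le_add_right _ _)

lemma satClause_insert {n : ℕ} {σ : Fin n → Bool} {l : Fin n × Bool}
    {c : Finset (Fin n × Bool)} :
    satClause σ (insert l c) ↔ satLit σ l ∨ satClause σ c := by
  simp [satClause, or_and_right, exists_or]

lemma satCNF_cnfOfDNF_iff {n : ℕ} (σ : Fin n → Bool) (φ : List (Finset (Fin n × Bool))) :
    satCNF σ (cnfOfDNF φ) ↔ satDNF σ φ := by
  induction φ with
  | nil => simp [satDNF, satCNF, cnfOfDNF, satClause]
  | cons t φ ih =>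
    calc satCNF σ (cnfOfDNF (t :: φ))
        ↔ ∀ c ∈ cnfOfDNF φ, ∀ l ∈ t, satLit σ l ∨ satClause σ c := by
          constructor
          · intro h c hc l hl
            exact satClause_insert.mp (h _ (mem_cnfOfDNF_cons.mpr ⟨c, hc, l, hl, rfl⟩))
          · intro h _ hc'
            obtain ⟨c, hc, l, hl, rfl⟩ := mem_cnfOfDNF_cons.mp hc'
            exact satClause_insert.mpr (h c hc l hl)
      _ ↔ ∀ c ∈ cnfOfDNF φ, satTerm σ t ∨ satClause σ c := by
          refine forall₂_congr fun c _ => ?_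
          by_cases hc : satClause σ c <;> simp [satTerm, hc]
      _ ↔ satTerm σ t ∨ satCNF σ (cnfOfDNF φ) := by
          by_cases ht : satTerm σ t <;> simp [satCNF, ht]
      _ ↔ satDNF σ (t :: φ) := by
          simp [ih, satDNF]

/-- A literal pointing away from `a` stays true further away from `a`; a complementary pair of
literals makes the clause valid. -/
lemma aMonotone_satClause {n : ℕ} {a : Fin n → Bool} {c : Finset (Fin n × Bool)}
    (h : ∀ l ∈ c, a l.1 ≠ l.2 ∨ (l.1, !l.2) ∈ c) : aMonotone a fun σ => satClause σ c := by
  rintro v x hvx ⟨l, hl, hvl⟩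
  rcases h l hl with ha | hneg
  · refine ⟨l, hl, ?_⟩
    have hx : x l.1 ≠ a l.1 := hvx l.1 (hvl ▸ ha.symm)
    exact (Bool.eq_not.mpr hx).trans (Bool.eq_not.mpr ha.symm).symm
  · by_cases hx : x l.1 = l.2
    · exact ⟨l, hl, hx⟩
    · exact ⟨_, hneg, Bool.eq_not.mpr hx⟩

lemma card_filter_mk_mem_le {α β : Type*} [Fintype α] [DecidableEq α] [DecidableEq β]
    (c : Finset (α × β)) (b : β) :
    (Finset.univ.filter fun i => (i, b) ∈ c).card ≤ (c.filter fun l => l.2 = b).card :=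
  Finset.card_le_card_of_injOn (fun i => (i, b)) (fun i hi => by simpa using hi)
    (fun _ _ _ _ h => (Prod.mk.inj h).1)

def negTranslation {n : ℕ} (c : Finset (Fin n × Bool)) : Fin n → Bool :=
  fun i => decide ((i, false) ∈ c)

lemma aMonotone_negTranslation {n : ℕ} (c : Finset (Fin n × Bool)) :
    aMonotone (negTranslation c) fun σ => satClause σ c := by
  refine aMonotone_satClause fun ⟨i, b⟩ hl => ?_
  cases b
  · simp [negTranslation, hl]
  · by_cases hneg : (i, false) ∈ c
    · exact Or.inr hneg
    · simp [negTranslation, hneg]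

/-- The set of translations assigning `true` to at most `r` variables is a
monotone basis for every `r`-almost-monotone DNF formula: if at most `r` terms
of the DNF formula `φ` contain a negative literal, then `φ` has a CNF
representation in which each clause is `a`-monotone for some translation `a`
with at most `r` variables assigned `true`. -/
theorem almost_monotone_basis {n : ℕ} (r : ℕ)
    (φ : List (Finset (Fin n × Bool)))
    (halmost : (φ.countP (fun t => decide (∃ l ∈ t, l.2 = false))) ≤ r) :
    ∃ cs : List (Finset (Fin n × Bool)),
      (∀ σ, satDNF σ φ ↔ satCNF σ cs) ∧
      ∀ c ∈ cs, ∃ a : Fin n → Bool,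
        (Finset.univ.filter (fun i => a i = true)).card ≤ r ∧
        aMonotone a (fun σ => satClause σ c) := by
  refine ⟨cnfOfDNF φ, fun σ => (satCNF_cnfOfDNF_iff σ φ).symm, fun c hc => ?_⟩
  refine ⟨negTranslation c, ?_, aMonotone_negTranslation c⟩
  calc (Finset.univ.filter fun i => negTranslation c i = true).card
      = (Finset.univ.filter fun i => (i, false) ∈ c).card := by simp [negTranslation]
    _ ≤ (c.filter fun l => l.2 = false).card := card_filter_mk_mem_le c false
    _ ≤ φ.countP (fun t => decide (∃ l ∈ t, l.2 = false)) :=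
        card_filter_le_countP_of_mem_cnfOfDNF _ hc
    _ ≤ r := halmost
end

section
/- Every safe finite transition system admits a backwards k-fenced inductive invariant: namely, taking I = complement of the set of states that can reach Bad in any number of steps, I is an inductive invariant, and I is backwards k-fenced for k equal to the co-diameter (the minimal k such that every state that can reach Bad can reach it in at most k steps). -/
/-- `reachIn δ k σ τ`: `τ` is reachable from `σ` in at most `k` steps of `δ`. -/
def reachIn {α : Type*} (δ : α → α → Prop) : ℕ → α → α → Prop
  | 0 => fun a b => a = b
  | k + 1 => fun a b => a = b ∨ ∃ c, δ a c ∧ reachIn δ k c b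

/-- Hamming neighbors: states differing in exactly one coordinate. -/
def hamNbr {n : ℕ} (x y : Fin n → Bool) : Prop :=
  ∃ i, x i ≠ y i ∧ ∀ j, j ≠ i → x j = y j

/-- Inner boundary: states of `S` with a Hamming neighbor outside `S`. -/
def innerB {n : ℕ} (S : Set (Fin n → Bool)) : Set (Fin n → Bool) :=
  {x | x ∈ S ∧ ∃ y, hamNbr x y ∧ y ∉ S}

/-- Outer boundary: states outside `S` with a Hamming neighbor in `S`. -/
def outerB {n : ℕ} (S : Set (Fin n → Bool)) : Set (Fin n → Bool) :=
  innerB Sᶜ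

/-- `I` is an inductive invariant of the transition system `(Init, δ, Bad)`. -/
def IsIndInvariant {n : ℕ} (Init Bad : Set (Fin n → Bool))
    (δ : (Fin n → Bool) → (Fin n → Bool) → Prop) (I : Set (Fin n → Bool)) : Prop :=
  Init ⊆ I ∧ (∀ σ σ', σ ∈ I → δ σ σ' → σ' ∈ I) ∧ I ∩ Bad = ∅

/-- `I` is backwards `k`-fenced: every state of the outer boundary of `I`
can reach `Bad` in at most `k` steps. -/
def BackFenced {n : ℕ} (Bad : Set (Fin n → Bool))
    (δ : (Fin n → Bool) → (Fin n → Bool) → Prop) (I : Set (Fin n → Bool))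
    (k : ℕ) : Prop :=
  ∀ σ ∈ outerB I, ∃ τ ∈ Bad, reachIn δ k σ τ

/-- `I` is forwards `k`-fenced: every state of the inner boundary of `I`
is reachable from `Init` in at most `k` steps. -/
def FwdFenced {n : ℕ} (Init : Set (Fin n → Bool))
    (δ : (Fin n → Bool) → (Fin n → Bool) → Prop) (I : Set (Fin n → Bool))
    (k : ℕ) : Prop :=
  ∀ σ ∈ innerB I, ∃ ι ∈ Init, reachIn δ k ι σ


lemma reachIn_mono {α : Type*} (δ : α → α → Prop) :
    ∀ {k k' : ℕ}, k ≤ k' → ∀ {a b : α}, reachIn δ k a b → reachIn δ k' a b := by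
  intro k
  induction k with
  | zero =>
      intro k' _ a b h; cases h
      cases k' with
      | zero => rfl
      | succ m => exact Or.inl rfl
  | succ m ih =>
      intro k' hk a b h
      obtain ⟨k'', rfl⟩ := Nat.exists_eq_add_of_le hk
      rcases h with rfl | ⟨c, hc, hcb⟩
      · cases (m + 1 + k'') with
        | zero => rfl
        | succ _ => exact Or.inl rfl
      · have : m + 1 + k'' = (m + k'') + 1 := by omega
        rw [this]
        exact Or.inr ⟨c, hc, ih (by omega) hcb⟩

lemma reachIn_tail {α : Type*} (δ : α → α → Prop) :
    ∀ {k : ℕ} {a b c : α}, reachIn δ k a b → δ b c → reachIn δ (k + 1) a c := by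
  intro k
  induction k with
  | zero => intro a b c h hbc; cases h; exact Or.inr ⟨c, hbc, rfl⟩
  | succ m ih =>
      intro a b c h hbc
      rcases h with rfl | ⟨d, had, hdb⟩
      · exact Or.inr ⟨c, hbc, Or.inl rfl⟩
      · exact Or.inr ⟨d, had, ih hdb hbc⟩

lemma reachIn_of_rtg {α : Type*} (δ : α → α → Prop) {a b : α}
    (h : Relation.ReflTransGen δ a b) : ∃ k, reachIn δ k a b := by
  induction h with
  | refl => exact ⟨0, rfl⟩
  | tail _ hstep ih =>
      obtain ⟨k, hk⟩ := ih
      exact ⟨k + 1, reachIn_tail δ hk hstep⟩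

/-- Every safe transition system admits a backwards `k`-fenced inductive
invariant: the complement of the set of states that can reach `Bad`,
with `k` the co-diameter (which exists since the state space is finite). -/
theorem gfp_backwards_fenced {n : ℕ} (Init Bad : Set (Fin n → Bool))
    (δ : (Fin n → Bool) → (Fin n → Bool) → Prop)
    (hInit : Init.Nonempty) (hdisj : Init ∩ Bad = ∅)
    (hsafe : ∀ σ ∈ Init, ∀ τ, Relation.ReflTransGen δ σ τ → τ ∉ Bad) :
    IsIndInvariant Init Bad δ {σ | ∀ τ, Relation.ReflTransGen δ σ τ → τ ∉ Bad} ∧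
    (∃ k : ℕ, ∀ σ, (∃ τ ∈ Bad, Relation.ReflTransGen δ σ τ) →
        ∃ τ ∈ Bad, reachIn δ k σ τ) ∧
    ∀ k : ℕ, (∀ σ, (∃ τ ∈ Bad, Relation.ReflTransGen δ σ τ) →
        ∃ τ ∈ Bad, reachIn δ k σ τ) →
      BackFenced Bad δ {σ | ∀ τ, Relation.ReflTransGen δ σ τ → τ ∉ Bad} k := by
    classical
  refine ⟨⟨fun σ hσ τ hτ => hsafe σ hσ τ hτ, ?_, ?_⟩, ?_, ?_⟩
  · intro σ σ' hσ hδ τ hτ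
    exact hσ τ (Relation.ReflTransGen.head hδ hτ)
  · ext σ
    simp only [Set.mem_inter_iff, Set.mem_setOf_eq, Set.mem_empty_iff_false, iff_false]
    rintro ⟨hI, hB⟩
    exact hI σ Relation.ReflTransGen.refl hB
  · -- existence of co-diameter
    have : ∀ σ : Fin n → Bool, ∃ k : ℕ, (∃ τ ∈ Bad, Relation.ReflTransGen δ σ τ) →
        ∃ τ ∈ Bad, reachIn δ k σ τ := by
      intro σ
      by_cases h : ∃ τ ∈ Bad, Relation.ReflTransGen δ σ τ
      · obtain ⟨τ, hτ, hr⟩ := h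
        obtain ⟨k, hk⟩ := reachIn_of_rtg δ hr
        exact ⟨k, fun _ => ⟨τ, hτ, hk⟩⟩
      · exact ⟨0, fun h' => absurd h' h⟩
    choose f hf using this
    refine ⟨Finset.univ.sup f, fun σ h => ?_⟩
    obtain ⟨τ, hτ, hk⟩ := hf σ h
    exact ⟨τ, hτ, reachIn_mono δ (Finset.le_sup (Finset.mem_univ σ)) hk⟩
  · intro k hk σ hσ
    obtain ⟨hσc, -⟩ := hσ
    simp only [Set.mem_compl_iff, Set.mem_setOf_eq, not_forall] at hσc
    obtain ⟨τ, hr, hτ⟩ := hσc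
    exact hk σ ⟨τ, not_not.mp hτ, hr⟩
end

section
/- The fence condition is preserved under conjunction of invariants for disjunction of bad sets: if I₁ is a backwards k-fenced inductive invariant of (Init, δ, Bad₁) and I₂ is a backwards k-fenced inductive invariant of (Init, δ, Bad₂), then I₁ ∩ I₂ is a backwards k-fenced inductive invariant of (Init, δ, Bad₁ ∪ Bad₂). -/
/-- The backwards fence condition is preserved under conjunction of invariants
for disjunction of bad sets. -/
theorem conj_preserves_back_fence {n : ℕ} (Init Bad₁ Bad₂ I₁ I₂ : Set (Fin n → Bool))
    (δ : (Fin n → Bool) → (Fin n → Bool) → Prop) (k : ℕ)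
    (hinv₁ : IsIndInvariant Init Bad₁ δ I₁) (hfence₁ : BackFenced Bad₁ δ I₁ k)
    (hinv₂ : IsIndInvariant Init Bad₂ δ I₂) (hfence₂ : BackFenced Bad₂ δ I₂ k) :
    IsIndInvariant Init (Bad₁ ∪ Bad₂) δ (I₁ ∩ I₂) ∧
    BackFenced (Bad₁ ∪ Bad₂) δ (I₁ ∩ I₂) k := by
  obtain ⟨hi1, hc1, hd1⟩ := hinv₁
  obtain ⟨hi2, hc2, hd2⟩ := hinv₂
  refine ⟨⟨fun σ hσ => ⟨hi1 hσ, hi2 hσ⟩, fun σ σ' hσ hδ => ⟨hc1 σ σ' hσ.1 hδ, hc2 σ σ' hσ.2 hδ⟩, ?_⟩, ?_⟩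
  · ext σ
    simp only [Set.mem_inter_iff, Set.mem_union, Set.mem_empty_iff_false, iff_false]
    rintro ⟨⟨h1, h2⟩, hb | hb⟩
    · exact absurd (Set.mem_inter h1 hb) (by simp [hd1])
    · exact absurd (Set.mem_inter h2 hb) (by simp [hd2])
  · rintro σ ⟨hσ, y, hnb, hy⟩
    simp only [Set.mem_compl_iff, Set.mem_inter_iff, not_and] at hσ hy
    push_neg at hy
    by_cases h1 : σ ∈ I₁
    · obtain ⟨τ, hτ, hr⟩ := hfence₂ σ ⟨fun h => hσ h1 h, y, hnb, fun h => h hy.2⟩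
      exact ⟨τ, Or.inr hτ, hr⟩
    · obtain ⟨τ, hτ, hr⟩ := hfence₁ σ ⟨h1, y, hnb, fun h => h hy.1⟩
      exact ⟨τ, Or.inl hτ, hr⟩
end

section
/- The fence condition is preserved under disjunction of invariants for disjunction of initial sets (forwards version): if I₁ is a forwards k-fenced inductive invariant of (Init₁, δ, Bad) and I₂ is a forwards k-fenced inductive invariant of (Init₂, δ, Bad), then I₁ ∪ I₂ is a forwards k-fenced inductive invariant of (Init₁ ∪ Init₂, δ, Bad). -/
/-- The forwards fence condition is preserved under disjunction of invariants
for disjunction of initial sets. -/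
theorem disj_preserves_fwd_fence {n : ℕ} (Init₁ Init₂ Bad I₁ I₂ : Set (Fin n → Bool))
    (δ : (Fin n → Bool) → (Fin n → Bool) → Prop) (k : ℕ)
    (hinv₁ : IsIndInvariant Init₁ Bad δ I₁) (hfence₁ : FwdFenced Init₁ δ I₁ k)
    (hinv₂ : IsIndInvariant Init₂ Bad δ I₂) (hfence₂ : FwdFenced Init₂ δ I₂ k) :
    IsIndInvariant (Init₁ ∪ Init₂) Bad δ (I₁ ∪ I₂) ∧
    FwdFenced (Init₁ ∪ Init₂) δ (I₁ ∪ I₂) k := by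
  obtain ⟨hi₁, hc₁, hb₁⟩ := hinv₁
  obtain ⟨hi₂, hc₂, hb₂⟩ := hinv₂
  refine ⟨⟨Set.union_subset_union hi₁ hi₂, ?_, ?_⟩, ?_⟩
  · rintro σ σ' (h | h) hd
    · exact Or.inl (hc₁ σ σ' h hd)
    · exact Or.inr (hc₂ σ σ' h hd)
  · rw [Set.union_inter_distrib_right, hb₁, hb₂, Set.union_empty]
  · rintro σ ⟨(h | h), y, hy, hyn⟩
    · obtain ⟨ι, hι, hr⟩ := hfence₁ σ ⟨h, y, hy, fun hm => hyn (Or.inl hm)⟩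
      exact ⟨ι, Or.inl hι, hr⟩
    · obtain ⟨ι, hι, hr⟩ := hfence₂ σ ⟨h, y, hy, fun hm => hyn (Or.inr hm)⟩
      exact ⟨ι, Or.inr hι, hr⟩
end

section
/- Crossing lemma for membership queries: let I be an inductive invariant that is forwards k₁-fenced and backwards k₂-fenced, let σ be any state, and let σ₀ ∈ Init. Consider any sequence of states σ = x₀, x₁, ..., x_m = σ₀ where consecutive states are Hamming-neighbors (differ in one coordinate). Then: if σ ∈ I, either some x_j with x_j ∈ I is reachable from Init in at most k₁ steps, and all x_i for i < j are in I; or all x_i ∈ I. If σ ∉ I, then the first index j with x_j ∈ I exists (since σ₀ ∈ Init ⊆ I) and x_{j-1} can reach Bad in at most k₂ steps, and no x_i with i < j is reachable from Init in at most k₁ steps. Consequently, the walk-based membership procedure correctly decides whether σ ∈ I. -/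

lemma reachIn_inv {n : ℕ} {I : Set (Fin n → Bool)}
    {δ : (Fin n → Bool) → (Fin n → Bool) → Prop}
    (hcl : ∀ σ σ', σ ∈ I → δ σ σ' → σ' ∈ I) :
    ∀ k (a b : Fin n → Bool), a ∈ I → reachIn δ k a b → b ∈ I := by
  intro k
  induction k with
  | zero => intro a b ha h; cases h; exact ha
  | succ k ih =>
    intro a b ha h
    rcases h with h | ⟨c, hac, hcb⟩
    · cases h; exact ha
    · exact ih c b (hcl a c ha hac) hcb

/-- Crossing lemma for membership queries: let `I` be a forwards `k₁`-fenced
and backwards `k₂`-fenced inductive invariant, and let `x 0 = σ, ..., x m = σ₀`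
be a walk of Hamming neighbors ending at an initial state `σ₀`.
If `σ ∈ I`, either all states of the walk are in `I`, or some `x j ∈ I` is
reachable from `Init` in at most `k₁` steps with all earlier states in `I`.
If `σ ∉ I`, the first index `j` with `x j ∈ I` exists, `x (j-1)` can reach
`Bad` in at most `k₂` steps, and no earlier state of the walk is reachable
from `Init` in at most `k₁` steps. -/
theorem crossing_lemma {n : ℕ} (Init Bad I : Set (Fin n → Bool))
    (δ : (Fin n → Bool) → (Fin n → Bool) → Prop) (k₁ k₂ : ℕ)
    (hinv : IsIndInvariant Init Bad δ I)
    (hfwd : FwdFenced Init δ I k₁) (hback : BackFenced Bad δ I k₂)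
    (σ σ₀ : Fin n → Bool) (hσ₀ : σ₀ ∈ Init)
    (m : ℕ) (x : ℕ → (Fin n → Bool))
    (hx0 : x 0 = σ) (hxm : x m = σ₀)
    (hnbr : ∀ i < m, hamNbr (x i) (x (i + 1))) :
    (σ ∈ I →
      (∀ i ≤ m, x i ∈ I) ∨
      ∃ j ≤ m, x j ∈ I ∧ (∃ ι ∈ Init, reachIn δ k₁ ι (x j)) ∧
        ∀ i < j, x i ∈ I) ∧
    (σ ∉ I →
      ∃ j, 0 < j ∧ j ≤ m ∧ x j ∈ I ∧ (∀ i < j, x i ∉ I) ∧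
        (∃ τ ∈ Bad, reachIn δ k₂ (x (j - 1)) τ) ∧
        ∀ i < j, ¬ ∃ ι ∈ Init, reachIn δ k₁ ι (x i)) := by
  obtain ⟨hinit, hcl, _⟩ := hinv
  constructor
  · intro hσI
    by_cases hall : ∀ i ≤ m, x i ∈ I
    · exact Or.inl hall
    · right
      push_neg at hall
      obtain ⟨i₀, hi₀m, hi₀⟩ := hall
      have hex : ∃ i, x i ∉ I := ⟨i₀, hi₀⟩
      classical
      set j := Nat.find hex with hj
      have hjspec : x j ∉ I := Nat.find_spec hex
      have hjmin : ∀ i < j, x i ∈ I := fun i hi => by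
        by_contra h; exact absurd (Nat.find_le h) (not_le.mpr hi)
      have hjle : j ≤ i₀ := Nat.find_le hi₀
      have hjpos : 0 < j := by
        rcases Nat.eq_zero_or_pos j with h | h
        · exfalso; apply hjspec; rw [h, hx0]; exact hσI
        · exact h
      refine ⟨j - 1, ?_, hjmin _ (Nat.sub_lt hjpos one_pos), ?_, ?_⟩
      · omega
      · have hlt : j - 1 < m := by omega
        have hnb := hnbr (j - 1) hlt
        have : j - 1 + 1 = j := by omega
        rw [this] at hnb
        exact hfwd _ ⟨hjmin _ (Nat.sub_lt hjpos one_pos), x j, hnb, hjspec⟩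
      · intro i hi; exact hjmin i (by omega)
  · intro hσI
    have hex : ∃ i, x i ∈ I := ⟨m, by rw [hxm]; exact hinit hσ₀⟩
    classical
    set j := Nat.find hex with hj
    have hjspec : x j ∈ I := Nat.find_spec hex
    have hjmin : ∀ i < j, x i ∉ I := fun i hi h =>
      absurd (Nat.find_le h) (not_le.mpr hi)
    have hjle : j ≤ m := Nat.find_le (by rw [hxm]; exact hinit hσ₀)
    have hjpos : 0 < j := by
      rcases Nat.eq_zero_or_pos j with h | h
      · exfalso; apply hσI; rw [← hx0]
        have := hjspec; rwa [h] at this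
      · exact h
    refine ⟨j, hjpos, hjle, hjspec, hjmin, ?_, ?_⟩
    · have hlt : j - 1 < m := by omega
      have hnb := hnbr (j - 1) hlt
      have heq : j - 1 + 1 = j := by omega
      rw [heq] at hnb
      exact hback _ ⟨hjmin _ (Nat.sub_lt hjpos one_pos), x j, hnb, fun h => h hjspec⟩
    · rintro i hi ⟨ι, hι, hreach⟩
      exact hjmin i hi (reachIn_inv hcl k₁ ι (x i) (hinit hι) hreach)
end

section
/- An invariant that is both forwards fenced and backwards fenced is uniquely determined: if I₁ and I₂ are both inductive invariants of the same transition system such that I₁ is forwards k₁-fenced and backwards k₂-fenced, and I₂ is forwards k₁'-fenced and backwards k₂'-fenced, then I₁ = I₂. -/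
lemma reachIn_mem {n : ℕ} {Init Bad I : Set (Fin n → Bool)}
    {δ : (Fin n → Bool) → (Fin n → Bool) → Prop}
    (h : IsIndInvariant Init Bad δ I) :
    ∀ k σ τ, σ ∈ I → reachIn δ k σ τ → τ ∈ I := by
  intro k
  induction k with
  | zero =>
    intro σ τ hσ hr
    have : σ = τ := hr
    exact this ▸ hσ
  | succ k ih =>
    intro σ τ hσ hr
    rcases (hr : σ = τ ∨ ∃ c, δ σ c ∧ reachIn δ k c τ) with rfl | ⟨c, hc, hr⟩
    · exact hσ
    · exact ih c τ (h.2.1 σ c hσ hc) hr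

lemma hamNbr_symm {n : ℕ} {x y : Fin n → Bool} (h : hamNbr x y) : hamNbr y x := by
  obtain ⟨i, hi, hj⟩ := h
  exact ⟨i, fun e => hi e.symm, fun j hjne => (hj j hjne).symm⟩

/-- An inductive invariant that is both forwards fenced and backwards fenced is
unique: two such invariants of the same transition system coincide. -/
theorem two_sided_fence_unique {n : ℕ} (Init Bad : Set (Fin n → Bool))
    (δ : (Fin n → Bool) → (Fin n → Bool) → Prop)
    (I₁ I₂ : Set (Fin n → Bool)) (k₁ k₂ k₁' k₂' : ℕ)
    (hInit : Init.Nonempty)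
    (hinv₁ : IsIndInvariant Init Bad δ I₁)
    (hfwd₁ : FwdFenced Init δ I₁ k₁) (hback₁ : BackFenced Bad δ I₁ k₂)
    (hinv₂ : IsIndInvariant Init Bad δ I₂)
    (hfwd₂ : FwdFenced Init δ I₂ k₁') (hback₂ : BackFenced Bad δ I₂ k₂') :
    I₁ = I₂ := by
  -- A state in the outer boundary of a fenced invariant can reach Bad,
  -- hence cannot be inside any inductive invariant.
  have outer_notMem : ∀ (I J : Set (Fin n → Bool)) (k : ℕ),
      IsIndInvariant Init Bad δ J → BackFenced Bad δ I k →
      ∀ z ∈ outerB I, z ∉ J := by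
    intro I J k hJ hb z hz hzJ
    obtain ⟨τ, hτB, hr⟩ := hb z hz
    have : τ ∈ J := reachIn_mem hJ k z τ hzJ hr
    have : τ ∈ J ∩ Bad := ⟨this, hτB⟩
    rw [hJ.2.2] at this
    exact this
  -- A state in the inner boundary of a fenced invariant is reachable from Init,
  -- hence inside every inductive invariant.
  have inner_mem : ∀ (I J : Set (Fin n → Bool)) (k : ℕ),
      IsIndInvariant Init Bad δ J → FwdFenced Init δ I k →
      ∀ z ∈ innerB I, z ∈ J := by
    intro I J k hJ hf z hz
    obtain ⟨ι, hι, hr⟩ := hf z hz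
    exact reachIn_mem hJ k ι z (hJ.1 hι) hr
  -- Agreement propagates across Hamming neighbors.
  have step : ∀ u v : Fin n → Bool, hamNbr u v → (u ∈ I₁ ↔ u ∈ I₂) →
      (v ∈ I₁ ↔ v ∈ I₂) := by
    intro u v huv hagree
    constructor
    · intro hv1
      by_contra hv2
      by_cases hu2 : u ∈ I₂
      · -- v ∈ outerB I₂, but v ∈ I₁: contradiction
        have : v ∈ outerB I₂ := ⟨hv2 ∘ fun h => h, ⟨u, hamNbr_symm huv, fun h => h hu2⟩⟩
        exact outer_notMem I₂ I₁ k₂' hinv₁ hback₂ v this hv1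
      · -- u ∉ I₂ so u ∉ I₁; then v ∈ innerB I₁, so v ∈ I₂: contradiction
        have hu1 : u ∉ I₁ := fun h => hu2 (hagree.mp h)
        have : v ∈ innerB I₁ := ⟨hv1, ⟨u, hamNbr_symm huv, hu1⟩⟩
        exact hv2 (inner_mem I₁ I₂ k₁ hinv₂ hfwd₁ v this)
    · intro hv2
      by_contra hv1
      by_cases hu1 : u ∈ I₁
      · have : v ∈ outerB I₁ := ⟨hv1, ⟨u, hamNbr_symm huv, fun h => h hu1⟩⟩
        exact outer_notMem I₁ I₂ k₂ hinv₂ hback₁ v this hv2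
      · have hu2 : u ∉ I₂ := fun h => hu1 (hagree.mpr h)
        have : v ∈ innerB I₂ := ⟨hv2, ⟨u, hamNbr_symm huv, hu2⟩⟩
        exact hv1 (inner_mem I₂ I₁ k₁' hinv₁ hfwd₂ v this)
  -- Base point: an initial state, which lies in both invariants.
  obtain ⟨ι₀, hι₀⟩ := hInit
  have hbase : (ι₀ ∈ I₁ ↔ ι₀ ∈ I₂) := ⟨fun _ => hinv₂.1 hι₀, fun _ => hinv₁.1 hι₀⟩
  -- Propagate agreement to all states, by induction on Hamming distance to ι₀.
  have agree : ∀ (d : ℕ) (x : Fin n → Bool),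
      (Finset.univ.filter (fun i => x i ≠ ι₀ i)).card = d → (x ∈ I₁ ↔ x ∈ I₂) := by
    intro d
    induction d with
    | zero =>
      intro x hx
      have : ∀ i, x i = ι₀ i := by
        intro i
        by_contra h
        have : i ∈ Finset.univ.filter (fun i => x i ≠ ι₀ i) := by
          simp [h]
        rw [Finset.card_eq_zero] at hx
        simp [hx] at this
      have : x = ι₀ := funext this
      rw [this]; exact hbase
    | succ d ih =>
      intro x hx
      have hne : (Finset.univ.filter (fun i => x i ≠ ι₀ i)).Nonempty := by
        rw [← Finset.card_pos, hx]; omega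
      obtain ⟨i, hi⟩ := hne
      have hxi : x i ≠ ι₀ i := by simpa using hi
      set y := Function.update x i (ι₀ i) with hy
      have hny : hamNbr y x := by
        refine ⟨i, ?_, ?_⟩
        · simp [hy, Function.update_self]
          exact fun h => hxi h.symm
        · intro j hj
          simp [hy, Function.update_of_ne hj]
      have hcard : (Finset.univ.filter (fun j => y j ≠ ι₀ j)).card = d := by
        have hset : (Finset.univ.filter (fun j => y j ≠ ι₀ j))
            = (Finset.univ.filter (fun j => x j ≠ ι₀ j)).erase i := by
          ext j
          by_cases hj : j = i
          · subst hj
            simp [hy, Function.update_self]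
          · simp [hy, Function.update_of_ne hj, hj]
        rw [hset, Finset.card_erase_of_mem hi, hx]
        omega
      exact step y x hny (ih y hcard)
  ext x
  exact agree _ x rfl
end

section
/- Non-robustness of instrumentation: let (Init', δ', Bad') over vocabulary Σ' = Σ × Bool be obtained from (Init, δ, Bad) over Σ by instrumenting with a new variable q intended to capture a predicate ψ over Σ, i.e., Init' = {(σ, b) | σ ∈ Init, b = ψ(σ)} and δ' only relates consistent pre-states: whenever ((σ,b),(σ',b')) ∈ δ' then b = ψ(σ). If I ⊆ Σ is any set with both I and its complement nonempty, viewed as a subset of Σ' not constraining q, then I is NOT forwards k-fenced in the instrumented system for any k ∈ ℕ: its inner boundary contains an inconsistent state (one with b ≠ ψ(σ)), which is unreachable from Init'. -/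
/-- Hamming neighbors over the extended vocabulary `Σ × Bool` (the `Bool`
component is the new variable `q`): differ in exactly one original coordinate
or in the `q` component. -/
def hamNbr2 {n : ℕ} (s t : (Fin n → Bool) × Bool) : Prop :=
  (s.2 = t.2 ∧ hamNbr s.1 t.1) ∨ (s.1 = t.1 ∧ s.2 ≠ t.2)

/-- Inner boundary over the extended vocabulary: states of `S` with a Hamming
neighbor outside `S`. -/
def innerB2 {n : ℕ} (S : Set ((Fin n → Bool) × Bool)) :
    Set ((Fin n → Bool) × Bool) :=
  {s | s ∈ S ∧ ∃ u, hamNbr2 s u ∧ u ∉ S}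


lemma cross_aux {n : ℕ} (I : Set (Fin n → Bool)) :
    ∀ d (σ τ : Fin n → Bool), (Finset.univ.filter (fun i => σ i ≠ τ i)).card = d →
      σ ∈ I → τ ∉ I → ∃ a b, a ∈ I ∧ b ∉ I ∧ hamNbr a b := by
  intro d
  induction d with
  | zero =>
      intro σ τ h hσ hτ
      exfalso
      apply hτ
      have : σ = τ := by
        funext j
        by_contra hj
        have : j ∈ Finset.univ.filter (fun i => σ i ≠ τ i) := by simp [hj]
        simp [Finset.card_eq_zero.mp h] at this
      exact this ▸ hσ
  | succ d ih =>
      intro σ τ h hσ hτ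
      have hne : (Finset.univ.filter (fun i => σ i ≠ τ i)).Nonempty := by
        rw [← Finset.card_pos, h]; omega
      obtain ⟨i, hi⟩ := hne
      simp only [Finset.mem_filter] at hi
      set σ' := Function.update σ i (τ i) with hσ'
      have hnbr : hamNbr σ σ' := by
        refine ⟨i, ?_, ?_⟩
        · simp [hσ', Function.update_self]; exact hi.2
        · intro j hj; simp [hσ', Function.update_of_ne hj]
      by_cases hmem : σ' ∈ I
      · have hcard : (Finset.univ.filter (fun j => σ' j ≠ τ j)).card = d := by
          have : Finset.univ.filter (fun j => σ' j ≠ τ j)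
              = (Finset.univ.filter (fun j => σ j ≠ τ j)).erase i := by
            ext j
            by_cases hji : j = i
            · subst hji; simp [hσ', Function.update_self]
            · simp [hσ', Function.update_of_ne hji, hji]
          rw [this, Finset.card_erase_of_mem (by simp [hi.2]), h]; omega
        exact ih σ' τ hcard hmem hτ
      · exact ⟨σ, σ', hσ, hmem, hnbr⟩

/-- Non-robustness of instrumentation by a derived relation: if the system is
instrumented with a new variable `q` capturing the predicate `ψ` (initial
states and transition steps are consistent, i.e. interpret `q` as `ψ`), then
any set `I` over the original vocabulary, with `I` and its complement nonempty
and lifted so as not to constrain `q`, is not forwards `k`-fenced in the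
instrumented system for any `k`: its inner boundary contains an inconsistent
state, which is unreachable from the instrumented initial states. -/
theorem instrumentation_not_fwd_fenced {n : ℕ}
    (Init : Set (Fin n → Bool)) (ψ : (Fin n → Bool) → Bool)
    (δ' : ((Fin n → Bool) × Bool) → ((Fin n → Bool) × Bool) → Prop)
    (I : Set (Fin n → Bool)) (hI : I.Nonempty) (hIc : Iᶜ.Nonempty)
    (hδ : ∀ s t, δ' s t → s.2 = ψ s.1 ∧ t.2 = ψ t.1) :
    (∃ s : (Fin n → Bool) × Bool,
      s ∈ innerB2 {u | u.1 ∈ I} ∧ s.2 ≠ ψ s.1 ∧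
      ∀ k : ℕ, ¬ ∃ ι ∈ {u : (Fin n → Bool) × Bool | u.1 ∈ Init ∧ u.2 = ψ u.1},
        reachIn δ' k ι s) ∧
    ∀ k : ℕ, ¬ ∀ s ∈ innerB2 {u | u.1 ∈ I},
      ∃ ι ∈ {u : (Fin n → Bool) × Bool | u.1 ∈ Init ∧ u.2 = ψ u.1},
        reachIn δ' k ι s := by
  obtain ⟨σ0, hσ0⟩ := hI
  obtain ⟨τ0, hτ0⟩ := hIc
  obtain ⟨a, b, ha, hb, hnbr⟩ := cross_aux I _ σ0 τ0 rfl hσ0 hτ0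
  set s : (Fin n → Bool) × Bool := (a, !ψ a) with hs
  have hsB : s ∈ innerB2 {u : (Fin n → Bool) × Bool | u.1 ∈ I} := by
    refine ⟨ha, ⟨(b, !ψ a), Or.inl ⟨rfl, hnbr⟩, hb⟩⟩
  have hsIncons : s.2 ≠ ψ s.1 := by simp [hs]
  have key : ∀ k (ι : (Fin n → Bool) × Bool), ι.2 = ψ ι.1 → ¬ reachIn δ' k ι s := by
    intro k
    induction k with
    | zero =>
        intro ι hι hr
        exact hsIncons (hr ▸ hι)
    | succ k ih =>
        intro ι hι hr
        rcases hr with rfl | ⟨c, hc, hr⟩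
        · exact hsIncons hι
        · exact ih c (hδ _ _ hc).2 hr
  refine ⟨⟨s, hsB, hsIncons, fun k ⟨ι, hι, hr⟩ => key k ι hι.2 hr⟩, ?_⟩
  intro k hall
  obtain ⟨ι, hι, hr⟩ := hall s hsB
  exact key k ι hι.2 hr
end

section
/- Non-robustness of monotonization: let I be a Boolean function over variables p, p₂, ..., p_n in negation normal form that is not monotone in p, witnessed by a state σ with σ ⊨ I and σ[p ↦ true] ⊭ I and σ(p) = false. Let Î over the extended vocabulary with fresh variable q be obtained by replacing every positive occurrence of p in I by ¬q, so that Î is antitone in q. Let the instrumented system have Init' = Init ∧ (p ↔ ¬q) and δ' = (p ↔ ¬q) ∧ δ ∧ (p' ↔ ¬q'). Then Î is not forwards k-fenced in the instrumented system for any k: the state σ̂ obtained from σ by setting q = false is inconsistent (hence unreachable from Init'), satisfies Î, and has the Hamming-neighbor σ̂[p ↦ true] which does not satisfy Î, so σ̂ lies in the inner boundary ∂⁺(Î). -/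
/-- Non-robustness of monotonization by instrumentation: suppose `I` is not
monotone in the variable `p`, witnessed by `σ ∈ I` with `σ p = false` and
`σ[p ↦ true] ∉ I`. Let `Î` (over the extended vocabulary with fresh variable
`q` meant to capture `¬p`) agree with `I` on consistent states and be antitone
in `q`, and let the instrumented initial states and transitions enforce
consistency (`q = ¬p`). Then the inconsistent state `σ̂ = (σ, false)` lies in
the inner boundary of `Î` but is unreachable from the instrumented initial
states, so `Î` is not forwards `k`-fenced for any `k`. -/
theorem monotonization_not_fwd_fenced {n : ℕ} (p : Fin n)
    (I : Set (Fin n → Bool))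
    (Init' : Set ((Fin n → Bool) × Bool))
    (δ' : ((Fin n → Bool) × Bool) → ((Fin n → Bool) × Bool) → Prop)
    (Ihat : Set ((Fin n → Bool) × Bool))
    (σ : Fin n → Bool)
    (hσI : σ ∈ I) (hσp : σ p = false)
    (hσflip : Function.update σ p true ∉ I)
    (hcons : ∀ (τ : Fin n → Bool) (b : Bool), b = !τ p → ((τ, b) ∈ Ihat ↔ τ ∈ I))
    (hanti : ∀ τ : Fin n → Bool, (τ, true) ∈ Ihat → (τ, false) ∈ Ihat)
    (hInit : ∀ s ∈ Init', s.2 = !s.1 p)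
    (hδ : ∀ s t, δ' s t → s.2 = !s.1 p ∧ t.2 = !t.1 p) :
    (σ, false) ∈ innerB2 Ihat ∧
    (∀ k : ℕ, ¬ ∃ ι ∈ Init', reachIn δ' k ι (σ, false)) ∧
    ∀ k : ℕ, ¬ ∀ s ∈ innerB2 Ihat, ∃ ι ∈ Init', reachIn δ' k ι s := by
  have hmem : (σ, false) ∈ innerB2 Ihat := by
    refine ⟨hanti σ ((hcons σ true (by simp [hσp])).mpr hσI), ⟨Function.update σ p true, false⟩, ?_, ?_⟩
    · exact Or.inl ⟨rfl, p, by simp [hσp], fun j hj => by simp [Function.update, hj]⟩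
    · intro h
      exact hσflip ((hcons _ false (by simp)).mp h)
  have hreach : ∀ k (ι s : (Fin n → Bool) × Bool), ι.2 = !ι.1 p →
      reachIn δ' k ι s → s.2 = !s.1 p := by
    intro k
    induction k with
    | zero => intro ι s h hr; exact hr ▸ h
    | succ k ih =>
      intro ι s h hr
      rcases hr with rfl | ⟨c, hc, hr⟩
      · exact h
      · exact ih c s (hδ ι c hc).2 hr
  have hun : ∀ k : ℕ, ¬ ∃ ι ∈ Init', reachIn δ' k ι (σ, false) := by
    rintro k ⟨ι, hι, hr⟩
    have := hreach k ι (σ, false) (hInit ι hι) hr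
    simp [hσp] at this
  exact ⟨hmem, hun, fun k h => hun k (h _ hmem)⟩
end
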